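/- A bridgeless planar cubic map is 4-face-colorable if and only if it admits a weak Hamiltonian. -/

import Mathlib

/-- A (finite, oriented) combinatorial map: a finite set of darts `D`, the
rotation `σ` giving the cyclic order of darts around each vertex, and the
fixed-point-free involution `α` exchanging the two darts of each edge.
Vertices are the cycles of `σ`, edges the cycles of `α`, and faces the cycles
of `σ * α`. -/
structure CombMap where
  D : Type
  [fintypeD : Fintype D]
  σ : Equiv.Perm D
  α : Equiv.Perm D
  α_invol : ∀ d, α (α d) = d
  α_ne : ∀ d, α d ≠ d

attribute [instance] CombMap.fintypeD

/-- The setoid on darts whose classes are the cycles of a permutation. -/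
def permSetoid {D : Type*} (f : Equiv.Perm D) : Setoid D :=
  ⟨f.SameCycle, ⟨fun _ => Equiv.Perm.SameCycle.refl f _,
    fun h => h.symm, fun h h' => h.trans h'⟩⟩

/-- The number of cycles (orbits) of a permutation. -/
noncomputable def numCycles {D : Type*} (f : Equiv.Perm D) : ℕ :=
  Nat.card (Quotient (permSetoid f))

namespace CombMap

variable (M : CombMap)

/-- The face permutation of a combinatorial map. -/
def φ : Equiv.Perm M.D := M.σ * M.α

/-- A combinatorial map is connected if any dart can be reached from any other
using `σ` and `α`. -/
def Connected : Prop :=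
  ∀ a b : M.D, Relation.EqvGen (fun x y => y = M.σ x ∨ y = M.α x) a b

/-- A combinatorial map is planar if it is connected and satisfies the Euler
relation `#vertices - #edges + #faces = 2` (genus 0). -/
def Planar : Prop :=
  M.Connected ∧ numCycles M.σ + numCycles M.φ = numCycles M.α + 2

/-- A combinatorial map is cubic if every vertex has exactly three darts. -/
def Cubic : Prop := ∀ d, M.σ (M.σ (M.σ d)) = d ∧ M.σ d ≠ d

/-- A connected plane map is bridgeless iff no edge has the same face on both
of its sides. -/
def Bridgeless : Prop := ∀ d, ¬ M.φ.SameCycle d (M.α d)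

/-- A proper face coloring with colors in `C`: a function on darts that is
constant on faces (cycles of `φ`) and takes different values on the two sides
of every edge. -/
def ProperFaceColoring {C : Type*} (Φ : M.D → C) : Prop :=
  (∀ d, Φ (M.φ d) = Φ d) ∧ ∀ d, Φ d ≠ Φ (M.α d)

/-- A map is 4-face-colorable if its faces admit a proper coloring by 4
colors. -/
def FourColorable : Prop := ∃ Φ : M.D → Fin 4, M.ProperFaceColoring Φ

/-- A set of darts closed under `α`, i.e. a set of edges. -/
def EdgeSet (S : Set M.D) : Prop := ∀ d, d ∈ S ↔ M.α d ∈ S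

/-- The darts at the same vertex as `d`. -/
def vertexDarts (d : M.D) : Set M.D := {e | M.σ.SameCycle d e}

/-- A 2-factor: a set of edges such that every vertex is incident to exactly
two of its darts. -/
def IsTwoFactorSet (S : Set M.D) : Prop :=
  M.EdgeSet S ∧ ∀ d, (M.vertexDarts d ∩ S).ncard = 2

/-- A weak Hamiltonian: a 2-factor all of whose cycles have even length,
i.e. the 2-factor admits a proper 2-coloring of its vertices (a union of
disjoint cycles is bipartite iff all its cycles are even). -/
def IsWeakHamSet (S : Set M.D) : Prop :=
  M.IsTwoFactorSet S ∧
  ∃ c : M.D → Bool, (∀ d, c (M.σ d) = c d) ∧ ∀ d ∈ S, c (M.α d) ≠ c d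

/-- A perfect matching contained in `S`: a set of edges of `S` with exactly
one dart at each vertex (on the cycles of a 2-factor `S`, this is a choice of
alternating edges on each cycle). -/
def IsMatchingSet (S F : Set M.D) : Prop :=
  F ⊆ S ∧ M.EdgeSet F ∧ ∀ d, (M.vertexDarts d ∩ F).ncard = 1

/-- `S'` is a mutation of the weak Hamiltonian `S`: the union of the
complementary perfect matching `Sᶜ` with a perfect matching chosen on the
cycles of `S`. -/
def MutationSet (S S' : Set M.D) : Prop :=
  ∃ F : Set M.D, M.IsMatchingSet S F ∧ S' = Sᶜ ∪ F

end CombMap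

/-!
Identify the four colours with the Klein group `ZMod 2 × ZMod 2`, so that a 4-colouring is a pair
of face 2-colourings. In a connected planar map every edge set meeting each vertex in an even
number of darts is the boundary of a face 2-colouring (the set of edges across which it changes):
the image of the face-to-edge coboundary is the kernel of the edge-to-vertex boundary, by a
dimension count which is Euler's formula.

A face 2-colouring bounded by a 2-factor `S` of a cubic map orients the cycles of `S`: it takes
different values on the two darts of `S` at any vertex. Relative to this orientation, vertex
2-colourings that are proper on `S` and perfect matchings inside `S` determine each other.

Given a Klein colouring, the edges where the first coordinate changes form a 2-factor `S`, and
those where both coordinates change form a perfect matching inside `S`, so `S` is a weak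
Hamiltonian. Conversely, a weak Hamiltonian `S` yields a perfect matching `F` inside `S`; the
mutation `Sᶜ ∪ F` is again a 2-factor, and the face 2-colourings bounded by `S` and by `Sᶜ ∪ F`
together form a proper 4-colouring, since every edge lies in one of the two.
-/

theorem Equiv.Perm.SameCycle.eq_of_invariant {α β : Type*} {f : Equiv.Perm α} {g : α → β}
    (hg : ∀ x, g (f x) = g x) {x y : α} (h : f.SameCycle x y) : g x = g y := by
  obtain ⟨n, rfl⟩ := h
  induction n using Int.induction_on with
  | zero => rfl
  | succ k ih => rw [add_comm, zpow_add, zpow_one, Equiv.Perm.mul_apply, hg, ih]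
  | pred k ih =>
    rw [ih, sub_eq_neg_add, zpow_add, zpow_neg_one, Equiv.Perm.mul_apply]
    simpa using hg (f⁻¹ ((f ^ (-k : ℤ)) x))

theorem Equiv.Perm.mk_eq_mk_iff_sameCycle {α : Type*} {f : Equiv.Perm α} {a b : α} :
    Quotient.mk (permSetoid f) a = Quotient.mk (permSetoid f) b ↔ f.SameCycle a b :=
  Quotient.eq

theorem Set.ncard_pair_inter_eq_one_iff {α : Type*} {x y : α} (hxy : x ≠ y) (s : Set α) :
    ({x, y} ∩ s).ncard = 1 ↔ (x ∈ s ↔ y ∉ s) := by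
  by_cases hx : x ∈ s <;> by_cases hy : y ∈ s <;>
    simp [Set.insert_inter_of_mem, Set.insert_inter_of_notMem, hx, hy, hxy]

theorem zmod2_eq_zero_iff_ne_zero_of_ne : ∀ {x y : ZMod 2}, x ≠ y → (x = 0 ↔ y ≠ 0) := by
  decide

theorem zmod2_ne_iff_add_eq_one : ∀ {x y : ZMod 2}, y ≠ x ↔ x + y = 1 := by
  decide

theorem bool_eq_true_iff_ne_true_of_ne : ∀ {a b : Bool}, a ≠ b → (a = true ↔ b ≠ true) := by
  decide

theorem count_fst_ne_of_pairwise_ne : ∀ a b c : ZMod 2 × ZMod 2, b ≠ a → c ≠ b → a ≠ c →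
    (if b.1 ≠ a.1 then 1 else 0) + (if c.1 ≠ b.1 then 1 else 0) +
      (if a.1 ≠ c.1 then 1 else 0) = 2 := by
  decide

theorem count_fst_ne_and_snd_ne_of_pairwise_ne :
    ∀ a b c : ZMod 2 × ZMod 2, b ≠ a → c ≠ b → a ≠ c →
      (if b.1 ≠ a.1 ∧ b.2 ≠ a.2 then 1 else 0) + (if c.1 ≠ b.1 ∧ c.2 ≠ b.2 then 1 else 0) +
        (if a.1 ≠ c.1 ∧ a.2 ≠ c.2 then 1 else 0) = 1 := by
  decide

section IncidenceMap

open Classical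

variable {D : Type*} [Fintype D]

noncomputable def incidenceMap (f g : Equiv.Perm D) :
    (Quotient (permSetoid g) → ZMod 2) →ₗ[ZMod 2] (Quotient (permSetoid f) → ZMod 2) :=
  LinearMap.pi fun q =>
    ∑ d with Quotient.mk (permSetoid f) d = q, LinearMap.proj (Quotient.mk (permSetoid g) d)

theorem incidenceMap_apply (f g : Equiv.Perm D) (y : Quotient (permSetoid g) → ZMod 2)
    (q : Quotient (permSetoid f)) :
    incidenceMap f g y q = ∑ d with Quotient.mk (permSetoid f) d = q, y (Quotient.mk _ d) := by
  simp [incidenceMap]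

theorem finrank_cycles_fun_eq_numCycles (f : Equiv.Perm D) :
    Module.finrank (ZMod 2) (Quotient (permSetoid f) → ZMod 2) = numCycles f := by
  rw [Module.finrank_fintype_fun_eq_card, numCycles, Nat.card_eq_fintype_card]

end IncidenceMap

namespace CombMap

variable {M : CombMap}

theorem sameCycle_alpha_iff {d e : M.D} : M.α.SameCycle d e ↔ e = d ∨ e = M.α d := by
  have hα2 : M.α ^ (2 : ℤ) = 1 := Equiv.ext fun d => M.α_invol d
  refine ⟨fun ⟨n, hn⟩ => ?_, ?_⟩
  · rw [zpow_eq_zpow_emod n hα2] at hn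
    rcases Int.emod_two_eq_zero_or_one n with h | h <;> simp [h, ← hn]
  · rintro (rfl | rfl)
    exacts [⟨0, rfl⟩, ⟨1, rfl⟩]

theorem phi_alpha (d : M.D) : M.φ (M.α d) = M.σ d := by
  simp [φ, M.α_invol]

theorem vertexDarts_eq_of_sameCycle {d e : M.D} (h : M.σ.SameCycle d e) :
    M.vertexDarts d = M.vertexDarts e :=
  Set.ext fun _ => ⟨h.symm.trans, h.trans⟩

theorem EdgeSet.inter {S T : Set M.D} (hS : M.EdgeSet S) (hT : M.EdgeSet T) :
    M.EdgeSet (S ∩ T) := fun d => and_congr (hS d) (hT d)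

theorem Connected.iff_of_invariant (hM : M.Connected) {P : M.D → Prop}
    (hσ : ∀ d, P (M.σ d) ↔ P d) (hα : ∀ d, P (M.α d) ↔ P d) (a b : M.D) : P a ↔ P b := by
  induction hM a b with
  | rel x y h => rcases h with rfl | rfl <;> simp only [hσ, hα]
  | refl => rfl
  | symm _ _ _ ih => exact ih.symm
  | trans _ _ _ _ _ ih₁ ih₂ => exact ih₁.trans ih₂

theorem ProperFaceColoring.comp {α β : Type*} {Φ : M.D → α} (hΦ : M.ProperFaceColoring Φ)
    {f : α → β} (hf : Function.Injective f) : M.ProperFaceColoring (f ∘ Φ) :=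
  ⟨fun d => congrArg f (hΦ.1 d), fun d => hf.ne (hΦ.2 d)⟩

theorem fourColorable_iff_exists_zmod2_prod :
    M.FourColorable ↔ ∃ Φ : M.D → ZMod 2 × ZMod 2, M.ProperFaceColoring Φ := by
  let e : ZMod 2 × ZMod 2 ≃ Fin 4 := Fintype.equivFinOfCardEq rfl
  exact ⟨fun ⟨Φ, hΦ⟩ => ⟨_, hΦ.comp e.symm.injective⟩, fun ⟨Φ, hΦ⟩ => ⟨_, hΦ.comp e.injective⟩⟩

def faceBoundary {β : Type*} (ε : M.D → β) : Set M.D := {d | ε (M.α d) ≠ ε d}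

section FaceBoundary

variable {β : Type*} {ε : M.D → β}

theorem faceBoundary_edgeSet : M.EdgeSet (M.faceBoundary ε) := fun d => by
  simp [faceBoundary, M.α_invol, ne_comm]

theorem apply_sigma_ne_iff (hε : ∀ d, ε (M.φ d) = ε d) {d : M.D} :
    ε (M.σ d) ≠ ε d ↔ d ∈ M.faceBoundary ε := by
  rw [← phi_alpha, hε]; rfl

end FaceBoundary

theorem fourColorable_of_faceBoundary_union_eq_univ {ε₁ ε₂ : M.D → ZMod 2}
    (hε₁ : ∀ d, ε₁ (M.φ d) = ε₁ d) (hε₂ : ∀ d, ε₂ (M.φ d) = ε₂ d)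
    (h : M.faceBoundary ε₁ ∪ M.faceBoundary ε₂ = Set.univ) : M.FourColorable := by
  refine fourColorable_iff_exists_zmod2_prod.2
    ⟨fun d => (ε₁ d, ε₂ d), fun d => by simp [hε₁, hε₂], fun d hd => ?_⟩
  rcases (Set.ext_iff.1 h d).2 trivial with h₁ | h₂
  · exact h₁ (congrArg Prod.fst hd).symm
  · exact h₂ (congrArg Prod.snd hd).symm

section Homology

open Classical

theorem sum_mk_alpha_eq {R : Type*} [AddCommMonoid R] (g : M.D → R) (d : M.D) :
    ∑ e with Quotient.mk (permSetoid M.α) e = Quotient.mk _ d, g e = g d + g (M.α d) := by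
  rw [← Finset.sum_pair (M.α_ne d).symm]
  congr 1
  ext e
  rw [Finset.mem_filter, eq_comm, Equiv.Perm.mk_eq_mk_iff_sameCycle, sameCycle_alpha_iff]
  simp

theorem mk_phi (d : M.D) : Quotient.mk (permSetoid M.φ) (M.φ d) = Quotient.mk _ d :=
  Equiv.Perm.mk_eq_mk_iff_sameCycle.2 ⟨-1, by simp⟩

theorem mk_phi_alpha (d : M.D) :
    Quotient.mk (permSetoid M.φ) (M.α d) = Quotient.mk _ (M.σ d) :=
  Equiv.Perm.mk_eq_mk_iff_sameCycle.2 ⟨1, by simp [phi_alpha]⟩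

theorem mk_sigma (d : M.D) : Quotient.mk (permSetoid M.σ) (M.σ d) = Quotient.mk _ d :=
  Equiv.Perm.mk_eq_mk_iff_sameCycle.2 ⟨-1, by simp⟩

variable (M) in
noncomputable abbrev coboundary :
    (Quotient (permSetoid M.φ) → ZMod 2) →ₗ[ZMod 2] (Quotient (permSetoid M.α) → ZMod 2) :=
  incidenceMap M.α M.φ

variable (M) in
noncomputable abbrev boundary :
    (Quotient (permSetoid M.α) → ZMod 2) →ₗ[ZMod 2] (Quotient (permSetoid M.σ) → ZMod 2) :=
  incidenceMap M.σ M.α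

theorem coboundary_mk (y : Quotient (permSetoid M.φ) → ZMod 2) (d : M.D) :
    M.coboundary y (Quotient.mk _ d) = y (Quotient.mk _ d) + y (Quotient.mk _ (M.α d)) := by
  rw [incidenceMap_apply, sum_mk_alpha_eq]

theorem boundary_single (d : M.D) :
    M.boundary (Pi.single (Quotient.mk _ d) 1) =
      Pi.single (Quotient.mk _ d) 1 + Pi.single (Quotient.mk _ (M.α d)) 1 := by
  ext q
  calc M.boundary (Pi.single (Quotient.mk _ d) 1) q
      = ∑ e with Quotient.mk (permSetoid M.α) e = Quotient.mk _ d,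
          if Quotient.mk (permSetoid M.σ) e = q then 1 else 0 := by
        rw [incidenceMap_apply, Finset.sum_filter, Finset.sum_filter]
        exact Finset.sum_congr rfl fun e _ => by simp only [Pi.single_apply]; split_ifs <;> rfl
    _ = _ := by rw [sum_mk_alpha_eq]; simp [Pi.single_apply, eq_comm]

theorem boundary_apply_mk {S : Set M.D} {x : Quotient (permSetoid M.α) → ZMod 2}
    (hx : ∀ d, x (Quotient.mk _ d) = if d ∈ S then 1 else 0) (d : M.D) :
    M.boundary x (Quotient.mk _ d) = ((M.vertexDarts d ∩ S).ncard : ZMod 2) := by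
  rw [incidenceMap_apply]
  simp only [hx]
  rw [Finset.sum_boole, ← Set.ncard_coe_finset]
  congr
  ext e
  simp [vertexDarts, Equiv.Perm.mk_eq_mk_iff_sameCycle, Equiv.Perm.sameCycle_comm]

theorem range_coboundary_le_ker_boundary :
    LinearMap.range M.coboundary ≤ LinearMap.ker M.boundary := by
  rintro _ ⟨y, rfl⟩
  rw [LinearMap.mem_ker]
  ext q
  have hrot : ∑ d with Quotient.mk (permSetoid M.σ) d = q, y (Quotient.mk _ (M.σ d)) =
      ∑ d with Quotient.mk (permSetoid M.σ) d = q, y (Quotient.mk _ d) :=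
    Finset.sum_equiv M.σ (by simp [mk_sigma]) (fun _ _ => rfl)
  rw [incidenceMap_apply]
  simp only [coboundary_mk, mk_phi_alpha, Finset.sum_add_distrib, hrot, CharTwo.add_self_eq_zero,
    Pi.zero_apply]

theorem Connected.ker_coboundary_le (hM : M.Connected) (d₀ : M.D) :
    LinearMap.ker M.coboundary ≤ Submodule.span (ZMod 2) {fun _ => 1} := by
  intro y hy
  have hα : ∀ d, y (Quotient.mk _ (M.α d)) = y (Quotient.mk _ d) := fun d => by
    have := congrFun hy (Quotient.mk _ d)
    rw [coboundary_mk] at this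
    exact (CharTwo.add_eq_zero.1 this).symm
  have hconst : ∀ d, y (Quotient.mk _ d) = y (Quotient.mk _ d₀) := fun d =>
    (hM.iff_of_invariant (P := fun d => y (Quotient.mk _ d) = y (Quotient.mk _ d₀))
      (fun d => by rw [← mk_phi_alpha, hα]) (fun d => by rw [hα]) d₀ d).1 rfl
  rw [Submodule.mem_span_singleton]
  refine ⟨y (Quotient.mk _ d₀), funext fun q => ?_⟩
  induction q using Quotient.ind
  simp [hconst]

theorem Connected.range_boundary_sup_eq_top (hM : M.Connected) (d₀ : M.D) :
    LinearMap.range M.boundary ⊔ Submodule.span (ZMod 2) {Pi.single (Quotient.mk _ d₀) 1} =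
      ⊤ := by
  set W := LinearMap.range M.boundary ⊔
    Submodule.span (ZMod 2) {Pi.single (Quotient.mk _ d₀) 1}
  have hα : ∀ d, Pi.single (Quotient.mk (permSetoid M.σ) (M.α d)) (1 : ZMod 2) ∈ W ↔
      Pi.single (Quotient.mk (permSetoid M.σ) d) (1 : ZMod 2) ∈ W := fun d => by
    have h : Pi.single (Quotient.mk _ d) 1 + Pi.single (Quotient.mk _ (M.α d)) 1 ∈ W :=
      Submodule.mem_sup_left ⟨_, boundary_single d⟩
    exact ⟨fun h' => (Submodule.add_mem_iff_left W h').1 h,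
      fun h' => (Submodule.add_mem_iff_right W h').1 h⟩
  have hsingle : ∀ d, Pi.single (Quotient.mk (permSetoid M.σ) d) (1 : ZMod 2) ∈ W := fun d =>
    (hM.iff_of_invariant (P := fun d => Pi.single (Quotient.mk (permSetoid M.σ) d) 1 ∈ W)
      (fun d => by rw [mk_sigma]) hα d₀ d).1
      (Submodule.mem_sup_right (Submodule.mem_span_singleton_self _))
  rw [eq_top_iff, ← (Pi.basisFun (ZMod 2) _).span_eq, Submodule.span_le]
  rintro _ ⟨q, rfl⟩
  induction q using Quotient.ind
  simpa using hsingle _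

theorem Planar.nonempty (hP : M.Planar) : Nonempty M.D := by
  by_contra h
  rw [not_nonempty_iff] at h
  have := hP.2
  simp [numCycles] at this

theorem Planar.range_coboundary_eq_ker_boundary (hP : M.Planar) :
    LinearMap.range M.coboundary = LinearMap.ker M.boundary := by
  obtain ⟨d₀⟩ := hP.nonempty
  refine Submodule.eq_of_le_of_finrank_le range_coboundary_le_ker_boundary ?_
  have h₁ := LinearMap.finrank_range_add_finrank_ker M.coboundary
  have h₂ := LinearMap.finrank_range_add_finrank_ker M.boundary
  have h₃ := (Submodule.finrank_mono (hP.1.ker_coboundary_le d₀)).trans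
    (finrank_span_le_card _)
  have h₄ := Submodule.finrank_add_le_finrank_add_finrank (LinearMap.range M.boundary)
    (Submodule.span (ZMod 2) {Pi.single (Quotient.mk _ d₀) 1})
  rw [hP.1.range_boundary_sup_eq_top, finrank_top] at h₄
  have h₅ := finrank_span_le_card (R := ZMod 2)
    ({Pi.single (Quotient.mk (permSetoid M.σ) d₀) 1} : Set (_ → ZMod 2))
  simp only [Set.toFinset_singleton, Finset.card_singleton, finrank_cycles_fun_eq_numCycles]
    at h₁ h₂ h₃ h₄ h₅
  -- dim ker ∂ = #E - rank ∂ ≤ #E - #V + 1 = #F - 1 ≤ #F - dim ker δ = rank δ, by Euler's formula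
  have := hP.2
  omega

theorem Planar.exists_faceBoundary_eq (hP : M.Planar) {S : Set M.D} (hS : M.EdgeSet S)
    (heven : ∀ d, Even (M.vertexDarts d ∩ S).ncard) :
    ∃ ε : M.D → ZMod 2, (∀ d, ε (M.φ d) = ε d) ∧ M.faceBoundary ε = S := by
  let x : Quotient (permSetoid M.α) → ZMod 2 :=
    Quotient.lift (fun d => if d ∈ S then 1 else 0) fun _ _ h =>
      h.eq_of_invariant (g := fun d => if d ∈ S then 1 else 0) fun d => by simp only [← hS d]
  have hx : x ∈ LinearMap.ker M.boundary := by
    rw [LinearMap.mem_ker]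
    ext q
    induction q using Quotient.ind
    rw [boundary_apply_mk (fun _ => rfl)]
    exact (ZMod.natCast_eq_zero_iff_even).2 (heven _)
  obtain ⟨y, hy⟩ := hP.range_coboundary_eq_ker_boundary ▸ hx
  refine ⟨fun d => y (Quotient.mk _ d), fun d => congrArg y (mk_phi d), Set.ext fun d => ?_⟩
  have := congrFun hy (Quotient.mk _ d)
  rw [coboundary_mk] at this
  change y _ ≠ y _ ↔ d ∈ S
  rw [zmod2_ne_iff_add_eq_one, this]
  by_cases hd : d ∈ S <;> simp [x, hd]

end Homology

namespace Cubic

variable (hC : M.Cubic)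
include hC

theorem sigma_sigma_sigma (d : M.D) : M.σ (M.σ (M.σ d)) = d := (hC d).1

theorem sameCycle_sigma_iff {d e : M.D} :
    M.σ.SameCycle d e ↔ e = d ∨ e = M.σ d ∨ e = M.σ (M.σ d) := by
  have hσ3 : M.σ ^ (3 : ℤ) = 1 := Equiv.ext fun d => hC.sigma_sigma_sigma d
  refine ⟨fun ⟨n, hn⟩ => ?_, ?_⟩
  · rw [zpow_eq_zpow_emod n hσ3] at hn
    have : n % 3 = 0 ∨ n % 3 = 1 ∨ n % 3 = 2 := by omega
    rcases this with h | h | h <;> simp [h, ← hn, pow_two]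
  · rintro (rfl | rfl | rfl)
    exacts [⟨0, rfl⟩, ⟨1, rfl⟩, ⟨2, by simp [pow_two]⟩]

theorem vertexDarts_eq (d : M.D) : M.vertexDarts d = {d, M.σ d, M.σ (M.σ d)} := by
  ext e; simp [vertexDarts, hC.sameCycle_sigma_iff]

theorem ncard_vertexDarts_inter (d : M.D) (X : Set M.D) [DecidablePred (· ∈ X)] :
    (M.vertexDarts d ∩ X).ncard = (if d ∈ X then 1 else 0) + (if M.σ d ∈ X then 1 else 0) +
      (if M.σ (M.σ d) ∈ X then 1 else 0) := by
  classical
  have h₁ : M.σ d ≠ d := (hC d).2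
  have h₂ : M.σ (M.σ d) ≠ M.σ d := fun h => h₁ (M.σ.injective h)
  have h₃ : M.σ (M.σ d) ≠ d := fun h => h₁ (by rw [← h, hC.sigma_sigma_sigma, h])
  rw [hC.vertexDarts_eq, show ({d, M.σ d, M.σ (M.σ d)} ∩ X : Set M.D) =
    ↑(({d, M.σ d, M.σ (M.σ d)} : Finset M.D).filter (· ∈ X)) by ext; simp,
    Set.ncard_coe_finset, Finset.card_filter, Finset.sum_insert (by simp [h₁.symm, h₃.symm]),
    Finset.sum_pair h₂.symm, add_assoc]

theorem ncard_vertexDarts (d : M.D) : (M.vertexDarts d).ncard = 3 := by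
  classical
  simpa using hC.ncard_vertexDarts_inter d Set.univ

theorem apply_ne_of_sameCycle {β : Type*} {ε : M.D → β} (hε : ∀ d, ε (M.φ d) = ε d)
    {y y' : M.D} (hy : y ∈ M.faceBoundary ε) (hy' : y' ∈ M.faceBoundary ε)
    (h : M.σ.SameCycle y y') (hne : y ≠ y') : ε y' ≠ ε y := by
  rcases hC.sameCycle_sigma_iff.1 h with rfl | rfl | rfl
  · exact absurd rfl hne
  · exact (apply_sigma_ne_iff hε).2 hy
  · conv_rhs => rw [← hC.sigma_sigma_sigma y]
    exact ((apply_sigma_ne_iff hε).2 hy').symm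

end Cubic

variable {S F : Set M.D}

theorem IsTwoFactorSet.vertexDarts_inter_eq (hS : M.IsTwoFactorSet S) {y y' : M.D}
    (hy : y ∈ S) (hy' : y' ∈ S) (h : M.σ.SameCycle y y') (hne : y ≠ y') :
    M.vertexDarts y ∩ S = {y, y'} :=
  (Set.eq_of_subset_of_ncard_le (s := {y, y'}) (t := M.vertexDarts y ∩ S)
    (Set.insert_subset (Set.mem_inter (Equiv.Perm.SameCycle.refl _ _) hy)
      (Set.singleton_subset_iff.2 (Set.mem_inter h hy')))
    (by rw [hS.2 y, Set.ncard_pair hne]) (Set.toFinite _)).symm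

theorem IsTwoFactorSet.ncard_vertexDarts_inter_eq_one_iff (hS : M.IsTwoFactorSet S)
    (hFS : F ⊆ S) {y y' : M.D} (hy : y ∈ S) (hy' : y' ∈ S) (h : M.σ.SameCycle y y')
    (hne : y ≠ y') : (M.vertexDarts y ∩ F).ncard = 1 ↔ (y ∈ F ↔ y' ∉ F) := by
  rw [← Set.ncard_pair_inter_eq_one_iff hne, ← hS.vertexDarts_inter_eq hy hy' h hne,
    Set.inter_assoc, Set.inter_eq_right.2 hFS]

theorem IsMatchingSet.mem_iff_notMem (hS : M.IsTwoFactorSet S) (hF : M.IsMatchingSet S F)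
    {y y' : M.D} (hy : y ∈ S) (hy' : y' ∈ S) (h : M.σ.SameCycle y y') (hne : y ≠ y') :
    y ∈ F ↔ y' ∉ F :=
  (hS.ncard_vertexDarts_inter_eq_one_iff hF.1 hy hy' h hne).1 (hF.2.2 y)

theorem Cubic.isTwoFactorSet_of_mutationSet (hC : M.Cubic) {S' : Set M.D}
    (hS : M.IsTwoFactorSet S) (h : M.MutationSet S S') : M.IsTwoFactorSet S' := by
  obtain ⟨F, hF, rfl⟩ := h
  refine ⟨fun d => ?_, fun d => ?_⟩
  · simp only [Set.mem_union, Set.mem_compl_iff, ← hS.1 d, ← hF.2.1 d]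
  · have hsplit : M.vertexDarts d ∩ (Sᶜ ∪ F) =
        (M.vertexDarts d \ S) ∪ (M.vertexDarts d ∩ F) := by
      rw [Set.inter_union_distrib_left, Set.sdiff_eq]
    have hdisj : Disjoint (M.vertexDarts d \ S) (M.vertexDarts d ∩ F) :=
      Set.disjoint_left.2 fun _ h₁ h₂ => h₁.2 (hF.1 h₂.2)
    have := Set.ncard_inter_add_ncard_sdiff_eq_ncard (M.vertexDarts d) S
    rw [hS.2 d, hC.ncard_vertexDarts] at this
    rw [hsplit, Set.ncard_union_eq hdisj, hF.2.2 d]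
    omega

section Orientation

variable {ε : M.D → ZMod 2} (hC : M.Cubic) (hε : ∀ d, ε (M.φ d) = ε d)
include hC hε

theorem IsWeakHamSet.exists_isMatchingSet (hS : M.IsWeakHamSet S)
    (hSε : S ⊆ M.faceBoundary ε) : ∃ F, M.IsMatchingSet S F := by
  obtain ⟨hS₂, c, hcσ, hcα⟩ := hS
  refine ⟨{d | d ∈ S ∧ (c d = true ↔ ε d = 0)}, fun d hd => hd.1, fun d => ?_, fun d => ?_⟩
  · by_cases hd : d ∈ S
    · have hc := bool_eq_true_iff_ne_true_of_ne (hcα d hd)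
      have hε' := zmod2_eq_zero_iff_ne_zero_of_ne (hSε hd)
      simp only [Set.mem_ofPred_eq, hd, (hS₂.1 d).1 hd, true_and, hc, hε']
      tauto
    · simp [hd, mt (hS₂.1 d).2 hd]
  · obtain ⟨y, y', hne, hyy'⟩ := Set.ncard_eq_two.1 (hS₂.2 d)
    have hy : y ∈ M.vertexDarts d ∩ S := hyy' ▸ Set.mem_insert _ _
    have hy' : y' ∈ M.vertexDarts d ∩ S := hyy' ▸ Set.mem_insert_of_mem _ rfl
    have hsc : M.σ.SameCycle y y' := hy.1.symm.trans hy'.1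
    have hc : c y = c y' := hsc.eq_of_invariant hcσ
    have hε' := zmod2_eq_zero_iff_ne_zero_of_ne
      (hC.apply_ne_of_sameCycle hε (hSε hy.2) (hSε hy'.2) hsc hne)
    rw [vertexDarts_eq_of_sameCycle hy.1,
      hS₂.ncard_vertexDarts_inter_eq_one_iff (fun _ he => he.1) hy.2 hy'.2 hsc hne]
    simp only [Set.mem_ofPred_eq, hy.2, hy'.2, true_and, hc, hε']
    tauto

theorem IsMatchingSet.isWeakHamSet (hS : M.IsTwoFactorSet S) (hSε : S ⊆ M.faceBoundary ε)
    (hF : M.IsMatchingSet S F) : M.IsWeakHamSet S := by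
  classical
  have hc : ∀ d ∈ S,
      (∃ e ∈ S, M.σ.SameCycle d e ∧ (e ∈ F ↔ ε e = 0)) ↔ (d ∈ F ↔ ε d = 0) := by
    refine fun d hd => ⟨fun ⟨e, he, hde, hFe⟩ => ?_, fun h => ⟨d, hd, .refl _ _, h⟩⟩
    rcases eq_or_ne d e with rfl | hne
    · exact hFe
    · have hF' := hF.mem_iff_notMem hS hd he hde hne
      have hε' := zmod2_eq_zero_iff_ne_zero_of_ne
        (hC.apply_ne_of_sameCycle hε (hSε hd) (hSε he) hde hne)
      tauto
  refine ⟨hS, fun d => decide (∃ e ∈ S, M.σ.SameCycle d e ∧ (e ∈ F ↔ ε e = 0)),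
    fun d => ?_, fun d hd => ?_⟩
  · simp only [Equiv.Perm.sameCycle_apply_left]
  · have hε' := zmod2_eq_zero_iff_ne_zero_of_ne (hSε hd)
    simp only [ne_eq, decide_eq_decide, hc d hd, hc _ ((hS.1 d).1 hd), ← hF.2.1 d, hε']
    tauto

end Orientation

theorem Cubic.isWeakHamSet_faceBoundary_fst (hC : M.Cubic) {Φ : M.D → ZMod 2 × ZMod 2}
    (hΦ : M.ProperFaceColoring Φ) : M.IsWeakHamSet (M.faceBoundary fun d => (Φ d).1) := by
  classical
  have hε₁ : ∀ d, (Φ (M.φ d)).1 = (Φ d).1 := fun d => by rw [hΦ.1]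
  have hε₂ : ∀ d, (Φ (M.φ d)).2 = (Φ d).2 := fun d => by rw [hΦ.1]
  have hσ : ∀ d, Φ (M.σ d) ≠ Φ d := fun d => (apply_sigma_ne_iff hΦ.1).2 (hΦ.2 d).symm
  have hσ' : ∀ d, Φ d ≠ Φ (M.σ (M.σ d)) := fun d => by
    simpa only [hC.sigma_sigma_sigma] using hσ (M.σ (M.σ d))
  have hS : M.IsTwoFactorSet (M.faceBoundary fun d => (Φ d).1) := by
    refine ⟨faceBoundary_edgeSet, fun d => ?_⟩
    rw [hC.ncard_vertexDarts_inter]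
    simp only [← apply_sigma_ne_iff (ε := fun d => (Φ d).1) hε₁, hC.sigma_sigma_sigma]
    exact count_fst_ne_of_pairwise_ne _ _ _ (hσ d) (hσ _) (hσ' d)
  refine IsMatchingSet.isWeakHamSet hC hε₁ hS subset_rfl
    (F := M.faceBoundary (fun d => (Φ d).1) ∩ M.faceBoundary fun d => (Φ d).2)
    ⟨Set.inter_subset_left, faceBoundary_edgeSet.inter faceBoundary_edgeSet, fun d => ?_⟩
  rw [hC.ncard_vertexDarts_inter]
  simp only [Set.mem_inter_iff, ← apply_sigma_ne_iff (ε := fun d => (Φ d).1) hε₁,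
    ← apply_sigma_ne_iff (ε := fun d => (Φ d).2) hε₂, hC.sigma_sigma_sigma]
  exact count_fst_ne_and_snd_ne_of_pairwise_ne _ _ _ (hσ d) (hσ _) (hσ' d)

end CombMap

theorem fourColorable_iff_weakHam_general (M : CombMap) (hP : M.Planar)
    (hC : M.Cubic) :
    M.FourColorable ↔ ∃ S : Set M.D, M.IsWeakHamSet S := by
  have heven : ∀ {S : Set M.D}, M.IsTwoFactorSet S → ∀ d, Even (M.vertexDarts d ∩ S).ncard :=
    fun hS d => hS.2 d ▸ even_two
  refine ⟨fun h => ?_, fun ⟨S, hS⟩ => ?_⟩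
  · obtain ⟨Φ, hΦ⟩ := M.fourColorable_iff_exists_zmod2_prod.1 h
    exact ⟨_, hC.isWeakHamSet_faceBoundary_fst hΦ⟩
  · obtain ⟨ε₁, hε₁, rfl⟩ := hP.exists_faceBoundary_eq hS.1.1 (heven hS.1)
    obtain ⟨F, hF⟩ := hS.exists_isMatchingSet hC hε₁ subset_rfl
    have hS' := hC.isTwoFactorSet_of_mutationSet hS.1 ⟨F, hF, rfl⟩
    obtain ⟨ε₂, hε₂, hε₂S⟩ := hP.exists_faceBoundary_eq hS'.1 (heven hS')
    refine CombMap.fourColorable_of_faceBoundary_union_eq_univ hε₁ hε₂ ?_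
    rw [hε₂S, ← Set.union_assoc, Set.union_compl_self, Set.univ_union]

/-- A bridgeless planar cubic map is 4-face-colorable if and only if it admits
a weak Hamiltonian. -/
theorem fourColorable_iff_weakHam (M : CombMap) (hP : M.Planar)
    (hB : M.Bridgeless) (hC : M.Cubic) :
    M.FourColorable ↔ ∃ S : Set M.D, M.IsWeakHamSet S :=
  fourColorable_iff_weakHam_general M hP hC
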